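/- With α = 38/15 and β = −11/228, the symbol F(t) of the α-damping scheme satisfies F(t) < 0 for all t ∈ (0, π], i.e., the scheme provides strictly negative (dissipative) amplification for all nonzero wavenumbers up to the grid frequency. -/

import Mathlib

/-!
With `cos (2t) = 2 cos² t - 1` the bracket of `dampSymbol α β t` becomes a quadratic in `cos t`.
For `α = 38/15`, `β = -11/228` it is `(4/15) (4 c² - 23 c + 87)` with `c = cos t`, whose
discriminant `23² - 16 · 87` is negative, so the bracket is positive for every `t`; the prefactor
`-(1/6) sin² (t/2)` is negative as soon as `sin (t/2) ≠ 0`, in particular on `(0, π]`.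
-/

open Real

/-- Fourier symbol of the α-damping diffusion scheme. -/
noncomputable def dampSymbol (α β t : ℝ) : ℝ :=
  -(1/6) * Real.sin (t/2) ^ 2 *
    (24*α*β + 5*α + 6*(α*(4*β-1)+2) * Real.cos t + (α-2) * Real.cos (2*t) + 14)

theorem dampSymbol_eq_quadratic_cos (α β t : ℝ) :
    dampSymbol α β t = -(1/6) * sin (t/2) ^ 2 *
      (2*(α-2) * cos t ^ 2 + 6*(α*(4*β-1)+2) * cos t + (24*α*β + 4*α + 16)) := by
  rw [dampSymbol, cos_two_mul]
  ring

theorem dampSymbol_neg_of_quadratic_pos {α β t : ℝ} (hs : sin (t/2) ≠ 0)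
    (hq : 0 < 2*(α-2) * cos t ^ 2 + 6*(α*(4*β-1)+2) * cos t + (24*α*β + 4*α + 16)) :
    dampSymbol α β t < 0 := by
  rw [dampSymbol_eq_quadratic_cos]
  exact mul_neg_of_neg_of_pos (mul_neg_of_neg_of_pos (by norm_num) (by positivity)) hq

theorem sin_half_ne_zero_of_mem_Ioo {t : ℝ} (ht : t ∈ Set.Ioo 0 (2 * π)) : sin (t/2) ≠ 0 :=
  (sin_pos_of_pos_of_lt_pi (by linarith [ht.1]) (by linarith [ht.2])).ne'

/-- with `α = 38/15`, `β = −11/228`, the symbol is strictly negative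
for all wavenumbers `t ∈ (0, π]`. -/
theorem dampSymbol_neg_on_Ioc :
    ∀ t ∈ Set.Ioc (0:ℝ) π, dampSymbol (38/15) (-11/228) t < 0 := by
  rintro t ⟨ht0, htπ⟩
  refine dampSymbol_neg_of_quadratic_pos
    (sin_half_ne_zero_of_mem_Ioo ⟨ht0, by linarith [pi_pos]⟩) ?_
  have hq : 0 < 4 * cos t ^ 2 - 23 * cos t + 87 := by nlinarith [sq_nonneg (8 * cos t - 23)]
  linarith
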